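/- arXiv:2105.01988 — 3 statements merged into one kernel-verified Lean document; each statement's English description precedes it below -/
import Mathlib

section
/- Let T > 0 and Δ be real numbers, c a real number, N a natural number, and define arrival times r : ℕ → ℝ by r n = c + n·T for n ≤ N and r n = c + n·T + Δ for n > N. Then the number of indices n > N with r n < r N (i.e., packets sent under the new configuration that overtake the last packet of the old configuration) is at most ⌈|Δ|/T⌉. -/
/-! A packet `n > N` of the new configuration overtakes packet `N` only if
`(n - N) T < -Δ ≤ |Δ|`, so the overtaking indices lie in `(N, N + ⌈|Δ|/T⌉]`. -/

lemma le_add_ceil_abs_div_of_mul_add_lt {T Δ : ℝ} (hT : 0 < T) {m n : ℕ}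
    (h : (n : ℝ) * T + Δ < m * T) : n ≤ m + ⌈|Δ| / T⌉₊ := by
  have hlt : (n : ℝ) < m + |Δ| / T := by
    rw [← sub_lt_iff_lt_add', lt_div_iff₀ hT, sub_mul]
    linarith [neg_le_abs Δ]
  have hceil : (m : ℝ) + |Δ| / T ≤ m + ⌈|Δ| / T⌉₊ := by gcongr; exact Nat.le_ceil _
  exact_mod_cast (hlt.trans_le hceil).le

/-- The number of packets sent under the new configuration that overtake the last
packet of the old configuration is at most `⌈|Δ|/T⌉`. -/
theorem overtaking_packets_bound
    (T Δ c : ℝ) (hT : 0 < T) (N : ℕ) (r : ℕ → ℝ)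
    (h_old : ∀ n : ℕ, n ≤ N → r n = c + (n : ℝ) * T)
    (h_new : ∀ n : ℕ, N < n → r n = c + (n : ℝ) * T + Δ) :
    ({n : ℕ | N < n ∧ r n < r N}.ncard : ℤ) ≤ ⌈|Δ| / T⌉ := by
  have hsub : {n : ℕ | N < n ∧ r n < r N} ⊆ Set.Ioc N (N + ⌈|Δ| / T⌉₊) := by
    rintro n ⟨hNn, hlt⟩
    rw [h_new n hNn, h_old N le_rfl] at hlt
    exact ⟨hNn, le_add_ceil_abs_div_of_mul_add_lt hT (by linarith)⟩
  have hcard : {n : ℕ | N < n ∧ r n < r N}.ncard ≤ ⌈|Δ| / T⌉₊ := by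
    simpa using Set.ncard_le_ncard hsub (Set.finite_Ioc _ _)
  rw [← Int.natCast_ceil_eq_ceil (by positivity)]
  exact_mod_cast hcard
end

section
/- Let T > 0 and Δ be real numbers, c a real number, N a natural number, and define arrival times r : ℕ → ℝ by r n = c + n·T for n ≤ N and r n = c + n·T + Δ for n > N. Then the number of indices n such that either n ≥ 1 and the inter-arrival time r n − r (n−1) differs from T, or n is involved in a reordering (there exists m < n with r m > r n, or m > n with r m < r n), is at most 2·⌈|Δ|/T⌉. -/
/-!
Before and after the reconfiguration the arrival times advance by exactly `T` per packet, so the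
only inter-arrival time that can differ from `T` is the one of packet `N + 1`, and a reordered pair
`m < n` must straddle the reconfiguration, `m ≤ N < n`, with `(n - m) T < -Δ`. Hence
`n - m < k := ⌈|Δ|/T⌉`, and every affected packet lies in the window `(N - k, N + k]` of `2k`
indices.
-/

open Finset

noncomputable def arrivalTime (c T Δ : ℝ) (N n : ℕ) : ℝ :=
  c + n * T + if N < n then Δ else 0

section arrivalTime

variable {c T Δ : ℝ} {N : ℕ}

lemma eq_arrivalTime {r : ℕ → ℝ} (h_old : ∀ n : ℕ, n ≤ N → r n = c + (n : ℝ) * T)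
    (h_new : ∀ n : ℕ, N < n → r n = c + (n : ℝ) * T + Δ) : r = arrivalTime c T Δ N := by
  funext n
  unfold arrivalTime
  split_ifs with hn
  · exact h_new n hn
  · simpa using h_old n (not_lt.mp hn)

lemma arrivalTime_succ_sub (n : ℕ) :
    arrivalTime c T Δ N (n + 1) - arrivalTime c T Δ N n = T + if n = N then Δ else 0 := by
  unfold arrivalTime
  push_cast
  split_ifs <;> first | omega | ring

lemma eq_and_ne_zero_of_arrivalTime_succ_sub_ne {n : ℕ}
    (h : arrivalTime c T Δ N (n + 1) - arrivalTime c T Δ N n ≠ T) : n = N ∧ Δ ≠ 0 := by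
  rw [arrivalTime_succ_sub] at h
  by_cases hn : n = N <;> simp_all

lemma le_and_lt_and_sub_lt_ceil_of_arrivalTime_lt (hT : 0 < T) {m n : ℕ} (hmn : m < n)
    (hnm : arrivalTime c T Δ N n < arrivalTime c T Δ N m) :
    m ≤ N ∧ N < n ∧ n - m < ⌈|Δ| / T⌉₊ := by
  have hgap : (m : ℝ) * T < n * T := mul_lt_mul_of_pos_right (by exact_mod_cast hmn) hT
  unfold arrivalTime at hnm
  split_ifs at hnm with hn hm hm
  · linarith
  · refine ⟨not_lt.mp hm, hn, Nat.lt_ceil.mpr ?_⟩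
    rw [Nat.cast_sub hmn.le, lt_div_iff₀ hT, sub_mul]
    linarith [neg_le_abs Δ]
  · omega
  · linarith

end arrivalTime

/-- The number of packets that either do not have inter-arrival time `T` or are
involved in a reordering is at most `2·⌈|Δ|/T⌉`. -/
theorem transition_packets_bound
    (T Δ c : ℝ) (hT : 0 < T) (N : ℕ) (r : ℕ → ℝ)
    (h_old : ∀ n : ℕ, n ≤ N → r n = c + (n : ℝ) * T)
    (h_new : ∀ n : ℕ, N < n → r n = c + (n : ℝ) * T + Δ) :
    ({n : ℕ | (1 ≤ n ∧ r n - r (n - 1) ≠ T) ∨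
        (∃ m : ℕ, (m < n ∧ r m > r n) ∨ (n < m ∧ r m < r n))}.ncard : ℤ)
      ≤ 2 * ⌈|Δ| / T⌉ := by
  obtain rfl := eq_arrivalTime h_old h_new
  set k := ⌈|Δ| / T⌉₊
  calc _ ≤ ((Icc (N + 1 - k) (N + k) : Set ℕ).ncard : ℤ) := by
        gcongr
        · exact finite_toSet _
        rintro n (⟨hn, hgap⟩ | ⟨m, ⟨hmn, hlt⟩ | ⟨hnm, hlt⟩⟩) <;> simp only [coe_Icc, Set.mem_Icc]
        · obtain ⟨n, rfl⟩ := Nat.exists_eq_add_of_le' hn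
          rw [Nat.add_sub_cancel] at hgap
          obtain ⟨rfl, hΔ⟩ := eq_and_ne_zero_of_arrivalTime_succ_sub_ne hgap
          have hk : 0 < k := Nat.ceil_pos.mpr (div_pos (abs_pos.mpr hΔ) hT)
          omega
        · have := le_and_lt_and_sub_lt_ceil_of_arrivalTime_lt hT hmn hlt
          omega
        · have := le_and_lt_and_sub_lt_ceil_of_arrivalTime_lt hT hnm hlt
          omega
    _ ≤ 2 * k := by rw [Set.ncard_coe_finset, Nat.card_Icc]; omega
    _ = 2 * ⌈|Δ| / T⌉ := by rw [Int.natCast_ceil_eq_ceil (by positivity)]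
end

section
/- Let t₀ be a real number, t_cycle > 0, t_trans > 0, t_e2e ≥ 0, and let φ be a phase with 0 ≤ φ ≤ t_cycle − t_trans. Suppose the source emits packets at times s m = t₀ + φ + m·t_cycle for m ∈ ℕ, each packet's delivery completing at s m + t_e2e, and let t_act = t₀ + k·t_cycle for a natural number k ≥ 1. Then every packet emitted before t_act is completely delivered by t_act + t_e2e − t_trans; in particular, the transition interval during which old packets are still in transit after t_act is upper-bounded by the end-to-end delay t_e2e. -/
/-!
A packet emitted before `t_act = t₀ + k·t_cycle` belongs to a cycle `m < k`, because its phase is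
nonnegative. The phase bound `φ ≤ t_cycle − t_trans` makes its transmission end inside that cycle,
hence by the boundary `t_act`; its delivery completes `t_e2e` after emission.
-/

section CycleArithmetic

variable {t_cycle φ : ℝ} {m k : ℕ}

lemma cycle_index_lt_of_emission_lt (h_cycle : 0 < t_cycle) (hφ₀ : 0 ≤ φ)
    (h : φ + m * t_cycle < k * t_cycle) : m < k := by
  have hmk : (m : ℝ) * t_cycle < k * t_cycle := by linarith
  exact_mod_cast lt_of_mul_lt_mul_right hmk h_cycle.le

lemma transmission_end_le_cycle_boundary {t_trans : ℝ} (h_cycle : 0 ≤ t_cycle)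
    (hφ₁ : φ ≤ t_cycle - t_trans) (hmk : m < k) :
    φ + m * t_cycle + t_trans ≤ k * t_cycle := by
  have hnext : ((m : ℝ) + 1) * t_cycle ≤ k * t_cycle :=
    mul_le_mul_of_nonneg_right (by exact_mod_cast hmk) h_cycle
  linarith

end CycleArithmetic

theorem transition_interval_bound_general
    (t₀ t_cycle t_trans t_e2e φ : ℝ)
    (h_cycle : 0 < t_cycle)
    (hφ₀ : 0 ≤ φ) (hφ₁ : φ ≤ t_cycle - t_trans)
    (s : ℕ → ℝ) (hs : ∀ m : ℕ, s m = t₀ + φ + (m : ℝ) * t_cycle)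
    (k : ℕ) (t_act : ℝ) (h_act : t_act = t₀ + (k : ℝ) * t_cycle) :
    ∀ m : ℕ, s m < t_act → s m + t_e2e ≤ t_act + t_e2e - t_trans := by
  intro m hm
  rw [hs, h_act] at hm ⊢
  have hmk : m < k := cycle_index_lt_of_emission_lt h_cycle hφ₀ (by linarith)
  have h_end := transmission_end_le_cycle_boundary h_cycle.le hφ₁ hmk
  linarith

/-- Every packet emitted before the activation time is completely delivered by
`t_act + t_e2e − t_trans`; in particular the transition interval is upper-bounded
by the end-to-end delay. -/
theorem transition_interval_bound
    (t₀ t_cycle t_trans t_e2e φ : ℝ)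
    (h_cycle : 0 < t_cycle) (h_trans : 0 < t_trans) (h_e2e : 0 ≤ t_e2e)
    (hφ₀ : 0 ≤ φ) (hφ₁ : φ ≤ t_cycle - t_trans)
    (s : ℕ → ℝ) (hs : ∀ m : ℕ, s m = t₀ + φ + (m : ℝ) * t_cycle)
    (k : ℕ) (hk : 1 ≤ k) (t_act : ℝ) (h_act : t_act = t₀ + (k : ℝ) * t_cycle) :
    ∀ m : ℕ, s m < t_act → s m + t_e2e ≤ t_act + t_e2e - t_trans :=
  transition_interval_bound_general t₀ t_cycle t_trans t_e2e φ h_cycle hφ₀ hφ₁ s hs k t_act h_act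
end
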